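/- arXiv:1309.6423 — 2 statements merged into one kernel-verified Lean document; each statement's English description precedes it below -/
import Mathlib

section
/- Špaček–Robertson spirallikeness criterion: let α ∈ (−π/2, π/2) and let f be holomorphic on 𝔻 with f(0) = 0, f'(0) = 1, and f(z) ≠ 0 for z ≠ 0. Then f is spirallike of type α (in particular univalent) if and only if Re( e^{iα} · z f'(z)/f(z) ) > 0 for all z ∈ 𝔻 \ {0}. -/
open Complex Metric Set

noncomputable section

/-- `f` is spirallike of type `α ∈ (−π/2, π/2)`: `f` is injective on the unit disk and
for every `w ∈ f(𝔻)` and every `τ ≥ 0`, `w·exp(−e^{−iα}τ) ∈ f(𝔻)`. -/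
def SpirallikeOfType (α : ℝ) (f : ℂ → ℂ) : Prop :=
  Set.InjOn f (Metric.ball 0 1) ∧
    ∀ w ∈ f '' Metric.ball (0 : ℂ) 1, ∀ τ : ℝ, 0 ≤ τ →
      w * Complex.exp (-(Complex.exp (-(Complex.I * (α : ℂ))) * (τ : ℂ))) ∈
        f '' Metric.ball (0 : ℂ) 1

/-!
Write `Q(z) = e^{iα} z f'(z) / f(z)`, continued holomorphically to `Q(0) = e^{iα}`, and
`V(w) = -w / Q(w) = -e^{-iα} f(w) / f'(w)`. Along a solution of `w' = V(w)` the image `f(w(t))`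
runs along the spiral `f(w(0)) e^{-e^{-iα} t}`, while `d/dt ‖w‖² = -2 ‖w‖² Re (1 / Q(w))`.

If `f` is spirallike, `τ ↦ f⁻¹(f(z) e^{-e^{-iα} τ})` is such a solution; `f⁻¹` is holomorphic on
`f(𝔻)` (at critical values by the removable singularity theorem), so Schwarz's lemma shows that
`‖w‖` does not increase, whence `Re Q ≥ 0`. As `Re Q(0) = cos α > 0`, the minimum principle makes
`Re Q` positive.

Conversely, if `Re Q > 0` then `V` is holomorphic and points into every disk `‖w‖ ≤ r`, so the
flow of `V` exists for all positive times and stays in the disk, which gives spirallikeness.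
If `f z₁ = f z₂`, the trajectories from `z₁` and `z₂` have the same image at every time; on a
smaller disk `Re (1 / Q)` is bounded below, so both trajectories shrink exponentially into a
neighbourhood of `0` on which `f` is injective. There they meet, and backward uniqueness for the
Lipschitz field `V` gives `z₁ = z₂`.
-/

open Filter Function Topology
open scoped NNReal RealInnerProductSpace

section ODE

variable {E : Type*} [NormedAddCommGroup E] [NormedSpace ℝ E]

theorem exists_forall_hasDerivAt_of_hasCompactSupport [CompleteSpace E] {v : E → E}
    (hv : ContDiff ℝ 1 v) (hsupp : HasCompactSupport v) (x₀ : E) {T : ℝ} (hT : 0 ≤ T) :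
    ∃ γ : ℝ → E, γ 0 = x₀ ∧ ∀ t ∈ Icc 0 T, HasDerivAt γ (v (γ t)) t := by
  obtain ⟨K, hK⟩ := hv.lipschitzWith_of_hasCompactSupport hsupp one_ne_zero
  obtain ⟨L, hL⟩ := hsupp.exists_bound_of_continuous hv.continuous
  lift L to ℝ≥0 using (norm_nonneg _).trans (hL x₀)
  have hPL : IsPicardLindelof (fun _ ↦ v) (tmin := -1) (tmax := T + 1)
      ⟨0, by constructor <;> linarith⟩ x₀ (L * ⟨T + 1, by linarith⟩) 0 L K :=
    .of_time_independent (fun x _ ↦ hL x) hK.lipschitzOnWith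
      (by simp [max_eq_left (show (1 : ℝ) ≤ T + 1 by linarith)]; exact le_rfl)
  obtain ⟨γ, hγ0, hγ⟩ := hPL.exists_eq_forall_mem_Icc_hasDerivWithinAt₀
  exact ⟨γ, hγ0, fun t ht ↦ (hγ t ⟨by linarith [ht.1], by linarith [ht.2]⟩).hasDerivAt
    (Icc_mem_nhds (by linarith [ht.1]) (by linarith [ht.2]))⟩

theorem ODE_solution_left_eq_of_right_eq {v : E → E} {s : Set E} {K : ℝ≥0}
    (hv : LipschitzOnWith K v s) {γ₁ γ₂ : ℝ → E} {a b : ℝ} (hab : a ≤ b)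
    (hγ₁ : ∀ t ∈ Icc a b, γ₁ t ∈ s ∧ HasDerivAt γ₁ (v (γ₁ t)) t)
    (hγ₂ : ∀ t ∈ Icc a b, γ₂ t ∈ s ∧ HasDerivAt γ₂ (v (γ₂ t)) t) (hb : γ₁ b = γ₂ b) :
    γ₁ a = γ₂ a :=
  ODE_solution_unique_of_mem_Icc_left (v := fun _ ↦ v) (s := fun _ ↦ s) (fun _ _ ↦ hv)
    (fun t ht ↦ (hγ₁ t ht).2.continuousAt.continuousWithinAt)
    (fun t ht ↦ (hγ₁ t (Ioc_subset_Icc_self ht)).2.hasDerivWithinAt)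
    (fun t ht ↦ (hγ₁ t (Ioc_subset_Icc_self ht)).1)
    (fun t ht ↦ (hγ₂ t ht).2.continuousAt.continuousWithinAt)
    (fun t ht ↦ (hγ₂ t (Ioc_subset_Icc_self ht)).2.hasDerivWithinAt)
    (fun t ht ↦ (hγ₂ t (Ioc_subset_Icc_self ht)).1) hb ⟨le_rfl, hab⟩

end ODE

section Dissipative

variable {E : Type*} [NormedAddCommGroup E] [InnerProductSpace ℝ E]

theorem antitoneOn_exp_mul_norm_sq {γ γ' : ℝ → E} {a b c : ℝ}
    (hγ : ∀ t ∈ Icc a b, HasDerivAt γ (γ' t) t)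
    (hc : ∀ t ∈ Icc a b, ⟪γ t, γ' t⟫ ≤ -c * ‖γ t‖ ^ 2) :
    AntitoneOn (fun t ↦ Real.exp (2 * c * t) * ‖γ t‖ ^ 2) (Icc a b) := by
  have hderiv : ∀ t ∈ Icc a b, HasDerivAt (fun t ↦ Real.exp (2 * c * t) * ‖γ t‖ ^ 2)
      (2 * c * Real.exp (2 * c * t) * ‖γ t‖ ^ 2 + Real.exp (2 * c * t) * (2 * ⟪γ t, γ' t⟫)) t :=
    fun t ht ↦ by
      have hexp : HasDerivAt (fun t ↦ Real.exp (2 * c * t)) (Real.exp (2 * c * t) * (2 * c)) t :=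
        by simpa using ((hasDerivAt_id t).const_mul (2 * c)).exp
      exact (hexp.mul (hγ t ht).norm_sq).congr_deriv (by ring)
  refine antitoneOn_of_hasDerivWithinAt_nonpos (convex_Icc a b)
    (fun t ht ↦ (hderiv t ht).continuousAt.continuousWithinAt)
    (fun t ht ↦ (hderiv t (interior_subset ht)).hasDerivWithinAt) fun t ht ↦ ?_
  have := hc t (interior_subset ht)
  have := Real.exp_pos (2 * c * t)
  nlinarith

theorem exists_contDiff_hasCompactSupport_eqOn_closedBall [FiniteDimensional ℝ E] {g : E → E}
    {R ρ : ℝ} (hg : ContDiffOn ℝ 1 g (ball 0 R)) (hgi : ∀ x ∈ ball 0 R, ⟪x, g x⟫ ≤ 0)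
    (hρ : 0 ≤ ρ) (hρR : ρ < R) :
    ∃ v : E → E, ContDiff ℝ 1 v ∧ HasCompactSupport v ∧ EqOn v g (closedBall 0 ρ) ∧
      ∀ x, ⟪x, v x⟫ ≤ 0 := by
  let χ : ContDiffBump (0 : E) :=
    ⟨(ρ + R) / 2, (ρ + 3 * R) / 4, by linarith, by linarith⟩
  have hχR : tsupport χ ⊆ ball 0 R :=
    χ.tsupport_eq ▸ closedBall_subset_ball (by simp [χ]; linarith)
  refine ⟨fun x ↦ χ x • g x, contDiff_iff_contDiffAt.2 fun x ↦ ?_, χ.hasCompactSupport.smul_right,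
    fun x hx ↦ ?_, fun x ↦ ?_⟩
  · by_cases hx : x ∈ ball (0 : E) R
    · exact χ.contDiff.contDiffAt.smul (hg.contDiffAt (isOpen_ball.mem_nhds hx))
    · exact contDiffAt_const.congr_of_eventuallyEq <| notMem_tsupport_iff_eventuallyEq.1
        fun h ↦ hx (hχR (tsupport_smul_subset_left _ _ h))
  · simp only [χ.one_of_mem_closedBall (closedBall_subset_closedBall (by simp [χ]; linarith) hx),
      one_smul]
  · rw [real_inner_smul_right]
    by_cases hx : x ∈ ball (0 : E) R
    · exact mul_nonpos_of_nonneg_of_nonpos χ.nonneg (hgi x hx)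
    · simp [image_eq_zero_of_notMem_tsupport fun h ↦ hx (hχR h)]

theorem exists_forall_hasDerivAt_norm_le [FiniteDimensional ℝ E] {g : E → E} {R : ℝ}
    (hg : ContDiffOn ℝ 1 g (ball 0 R)) (hgi : ∀ x ∈ ball 0 R, ⟪x, g x⟫ ≤ 0) {z : E}
    (hz : z ∈ ball 0 R) {T : ℝ} (hT : 0 ≤ T) :
    ∃ γ : ℝ → E, γ 0 = z ∧ ∀ t ∈ Icc 0 T, ‖γ t‖ ≤ ‖z‖ ∧ HasDerivAt γ (g (γ t)) t := by
  obtain ⟨v, hv, hvsupp, hvg, hvi⟩ := exists_contDiff_hasCompactSupport_eqOn_closedBall hg hgi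
    (norm_nonneg z) (mem_ball_zero_iff.1 hz)
  obtain ⟨γ, hγ0, hγ⟩ := exists_forall_hasDerivAt_of_hasCompactSupport hv hvsupp z hT
  have hanti := antitoneOn_exp_mul_norm_sq (c := 0) hγ (fun t _ ↦ by simpa using hvi (γ t))
  have hnorm : ∀ t ∈ Icc 0 T, ‖γ t‖ ≤ ‖z‖ := fun t ht ↦ by
    have := hanti ⟨le_rfl, hT⟩ ht ht.1
    simp only [mul_zero, zero_mul, Real.exp_zero, one_mul, hγ0] at this
    exact (pow_le_pow_iff_left₀ (norm_nonneg _) (norm_nonneg _) two_ne_zero).1 this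
  refine ⟨γ, hγ0, fun t ht ↦ ⟨hnorm t ht, ?_⟩⟩
  rw [← hvg (mem_closedBall_zero_iff.2 (hnorm t ht))]
  exact hγ t ht

end Dissipative

theorem HasDerivAt.nonpos_of_isMaxOn_Ici {φ : ℝ → ℝ} {a D : ℝ} (hφ : HasDerivAt φ D a)
    (hmax : IsMaxOn φ (Ici a) a) : D ≤ 0 := by
  have hcone : (1 : ℝ) ∈ posTangentConeAt (Ici a) a := by
    rw [one_mem_posTangentConeAt_iff_mem_closure, inter_eq_left.2 Ioi_subset_Ici_self, closure_Ioi]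
    exact mem_Ici.2 le_rfl
  simpa using hmax.localize.hasFDerivWithinAt_nonpos hφ.hasFDerivAt.hasFDerivWithinAt hcone

theorem HasStrictDerivAt.exists_injOn_ball {𝕜 : Type*} [NontriviallyNormedField 𝕜]
    [CompleteSpace 𝕜] {f : 𝕜 → 𝕜} {f' a : 𝕜} (hf : HasStrictDerivAt f f' a) (hf' : f' ≠ 0) :
    ∃ δ > 0, InjOn f (ball a δ) := by
  obtain ⟨δ, hδ, hball⟩ := Metric.eventually_nhds_iff_ball.1 (hf.eventually_left_inverse hf')
  exact ⟨δ, hδ, fun x hx y hy hxy ↦ by rw [← hball x hx, ← hball y hy, hxy]⟩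

theorem re_pos_of_re_nonneg {E : Type*} [NormedAddCommGroup E] [NormedSpace ℂ E] {g : E → ℂ}
    {U : Set E} (hUc : IsPreconnected U) (hUo : IsOpen U) (hg : DifferentiableOn ℂ g U)
    (hnonneg : ∀ z ∈ U, 0 ≤ (g z).re) {z₀ : E} (hz₀ : z₀ ∈ U) (hpos : 0 < (g z₀).re) :
    ∀ z ∈ U, 0 < (g z).re := by
  intro z hz
  by_contra hle
  have hzero : (g z).re = 0 := le_antisymm (not_lt.1 hle) (hnonneg z hz)
  have hnorm : ∀ w, ‖exp (-g w)‖ = Real.exp (-(g w).re) := fun w ↦ by simp [norm_exp]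
  have hmax : IsMaxOn (norm ∘ fun w ↦ exp (-g w)) U z := fun w hw ↦ by
    simpa [hnorm, hzero] using hnonneg w hw
  have := Complex.norm_eqOn_of_isPreconnected_of_isMaxOn hUc hUo hg.neg.cexp hz hmax hz₀
  simp only [Function.comp_apply, Function.const_apply, Pi.neg_apply, hnorm, hzero, neg_zero,
    Real.exp_eq_exp] at this
  linarith

theorem re_inv_pos_of_re_pos {q : ℂ} (hq : 0 < q.re) : 0 < (q⁻¹).re := by
  rw [inv_re]
  exact div_pos hq (normSq_pos.2 fun h ↦ by simp [h] at hq)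

section InverseFunction

variable {U : Set ℂ} {f : ℂ → ℂ} {z₀ : ℂ}

theorem not_eventually_eq_of_injOn (hinj : InjOn f U) (hU : U ∈ 𝓝 z₀) :
    ¬∀ᶠ z in 𝓝 z₀, f z = f z₀ := by
  intro h
  obtain ⟨z, ⟨hfz, hz⟩, hne⟩ :=
    ((eventually_nhdsWithin_of_eventually_nhds (h.and hU)).and
      (self_mem_nhdsWithin : {z₀}ᶜ ∈ 𝓝[≠] z₀)).exists
  exact hne (hinj hz (mem_of_mem_nhds hU) hfz)

variable (hU : IsOpen U) (hf : DifferentiableOn ℂ f U) (hinj : InjOn f U)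
include hU hf hinj

theorem nhds_le_map_nhds_of_injOn (hz₀ : z₀ ∈ U) : 𝓝 (f z₀) ≤ map f (𝓝 z₀) :=
  (hf.analyticAt (hU.mem_nhds hz₀)).eventually_constant_or_nhds_le_map_nhds.resolve_left
    (not_eventually_eq_of_injOn hinj (hU.mem_nhds hz₀))

theorem continuousAt_invFunOn (hz₀ : z₀ ∈ U) : ContinuousAt (invFunOn f U) (f z₀) := by
  rw [ContinuousAt, hinj.leftInvOn_invFunOn hz₀]
  intro s hs
  refine mem_map.2 <| mem_of_superset (nhds_le_map_nhds_of_injOn hU hf hinj hz₀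
    (image_mem_map (inter_mem hs (hU.mem_nhds hz₀)))) ?_
  rintro _ ⟨u, ⟨hus, huU⟩, rfl⟩
  rwa [mem_preimage, hinj.leftInvOn_invFunOn huU]

theorem hasDerivAt_invFunOn (hz₀ : z₀ ∈ U) (hd : deriv f z₀ ≠ 0) :
    HasDerivAt (invFunOn f U) (deriv f z₀)⁻¹ (f z₀) := by
  refine HasDerivAt.of_local_left_inverse (f := f) (continuousAt_invFunOn hU hf hinj hz₀) ?_ hd ?_
  · rw [hinj.leftInvOn_invFunOn hz₀]
    exact (hf.differentiableAt (hU.mem_nhds hz₀)).hasDerivAt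
  · filter_upwards [nhds_le_map_nhds_of_injOn hU hf hinj hz₀ (image_mem_map (hU.mem_nhds hz₀))]
      with w hw
    exact invFunOn_eq hw

theorem eventually_deriv_ne_zero_of_injOn (hz₀ : z₀ ∈ U) : ∀ᶠ z in 𝓝[≠] z₀, deriv f z ≠ 0 := by
  refine ((hf.analyticOnNhd hU).deriv z₀ hz₀).eventually_eq_zero_or_eventually_ne_zero.resolve_left
    fun h ↦ not_eventually_eq_of_injOn hinj (hU.mem_nhds hz₀) ?_
  obtain ⟨ε, hε, hball⟩ := Metric.eventually_nhds_iff_ball.1 (h.and (hU.eventually_mem hz₀))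
  filter_upwards [ball_mem_nhds z₀ hε] with z hz
  exact isOpen_ball.is_const_of_deriv_eq_zero (convex_ball z₀ ε).isPreconnected
    (hf.mono fun w hw ↦ (hball w hw).2) (fun w hw ↦ (hball w hw).1) hz (mem_ball_self hε)

theorem differentiableAt_invFunOn (hz₀ : z₀ ∈ U) : DifferentiableAt ℂ (invFunOn f U) (f z₀) := by
  refine (Complex.analyticAt_of_differentiable_on_punctured_nhds_of_continuousAt ?_
    (continuousAt_invFunOn hU hf hinj hz₀)).differentiableAt
  obtain ⟨ε, hε, hball⟩ := Metric.eventually_nhds_iff_ball.1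
    ((eventually_nhdsWithin_iff.1 (eventually_deriv_ne_zero_of_injOn hU hf hinj hz₀)).and
      (hU.eventually_mem hz₀))
  rw [eventually_nhdsWithin_iff]
  filter_upwards [nhds_le_map_nhds_of_injOn hU hf hinj hz₀ (image_mem_map (ball_mem_nhds z₀ hε))]
  rintro _ ⟨u, hu, rfl⟩ hne
  have hu₀ : u ≠ z₀ := by rintro rfl; exact hne rfl
  exact (hasDerivAt_invFunOn hU hf hinj (hball u hu).2 ((hball u hu).1 hu₀)).differentiableAt

end InverseFunction

local notation "𝔻" => Metric.ball (0 : ℂ) 1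

/-- `e^{iα} z f'(z) / f(z)`, written as `e^{iα} f'(z) / (f(z) / z)` so that it stays holomorphic
through `z = 0` when `f 0 = 0`. -/
def spiralQuotient (α : ℝ) (f : ℂ → ℂ) (z : ℂ) : ℂ :=
  exp (I * α) * deriv f z / dslope f 0 z

/-- `-w / Q(w) = -e^{-iα} f(w) / f'(w)` for `Q = spiralQuotient α f`; its flow moves `f w` along
the spiral `t ↦ f w * exp (-e^{-iα} t)`. -/
def spiralField (α : ℝ) (f : ℂ → ℂ) (w : ℂ) : ℂ :=
  -(w * (spiralQuotient α f w)⁻¹)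

section Spiral

variable {α : ℝ} {f : ℂ → ℂ}

theorem spiralQuotient_of_ne_zero (h0 : f 0 = 0) {z : ℂ} (hz : z ≠ 0) :
    spiralQuotient α f z = exp (I * α) * z * deriv f z / f z := by
  rw [spiralQuotient, dslope_of_ne _ hz, slope_def_field, h0, sub_zero, sub_zero,
    div_div_eq_mul_div]
  ring

theorem re_spiralQuotient_zero (h1 : deriv f 0 = 1) : (spiralQuotient α f 0).re = Real.cos α := by
  rw [spiralQuotient, dslope_same, h1, mul_one, div_one, mul_comm, exp_ofReal_mul_I_re]

theorem dslope_ne_zero (h0 : f 0 = 0) (h1 : deriv f 0 = 1) {z : ℂ} (hnz : z ≠ 0 → f z ≠ 0) :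
    dslope f 0 z ≠ 0 := by
  rcases eq_or_ne z 0 with rfl | hz
  · simp [h1]
  · rw [dslope_of_ne _ hz, slope_def_field, h0, sub_zero, sub_zero]
    exact div_ne_zero (hnz hz) hz

theorem differentiableOn_spiralQuotient (hf : DifferentiableOn ℂ f 𝔻) (h0 : f 0 = 0)
    (h1 : deriv f 0 = 1) (hnz : ∀ z ∈ 𝔻, z ≠ 0 → f z ≠ 0) :
    DifferentiableOn ℂ (spiralQuotient α f) 𝔻 :=
  ((hf.analyticOnNhd isOpen_ball).deriv.differentiableOn.const_mul _).div
    ((Complex.differentiableOn_dslope (ball_mem_nhds 0 one_pos)).2 hf)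
    fun z hz ↦ dslope_ne_zero h0 h1 (hnz z hz)

theorem inner_spiralField (w : ℂ) :
    ⟪w, spiralField α f w⟫ = -(‖w‖ ^ 2 * ((spiralQuotient α f w)⁻¹).re) := by
  rw [Complex.inner, spiralField, neg_mul, mul_right_comm, mul_conj, neg_re, re_ofReal_mul,
    normSq_eq_norm_sq]

theorem spiralField_eq (h0 : f 0 = 0) {w : ℂ} (hd : deriv f w ≠ 0) :
    spiralField α f w = -(exp (-(I * α)) * f w) / deriv f w := by
  have hfw : w * dslope f 0 w = f w := by simpa [h0] using sub_smul_dslope f 0 w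
  rw [spiralField, spiralQuotient, inv_div, exp_neg, ← hfw]
  field_simp

theorem norm_invFunOn_mul_le (hf : DifferentiableOn ℂ f 𝔻)
    (hinj : InjOn f 𝔻) (h0 : f 0 = 0) {c : ℂ}
    (hc : ∀ u ∈ 𝔻, f u * c ∈ f '' 𝔻) {z : ℂ} (hz : z ∈ 𝔻) :
    ‖invFunOn f 𝔻 (f z * c)‖ ≤ ‖z‖ := by
  refine Complex.norm_le_norm_of_mapsTo_ball (f := fun u ↦ invFunOn f 𝔻 (f u * c))
    (fun u hu ↦ ?_) (fun u hu ↦ ball_subset_closedBall (invFunOn_mem (hc u hu))) ?_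
    (mem_ball_zero_iff.1 hz)
  · obtain ⟨v, hv, hveq⟩ := hc u hu
    have hinv := differentiableAt_invFunOn isOpen_ball hf hinj hv
    rw [hveq] at hinv
    exact (hinv.comp u ((hf.differentiableAt (isOpen_ball.mem_nhds hu)).mul_const c))
      |>.differentiableWithinAt
  · simpa [h0] using hinj.leftInvOn_invFunOn (mem_ball_self one_pos)

theorem hasDerivAt_invFunOn_spiral (hf : DifferentiableOn ℂ f 𝔻)
    (hinj : InjOn f 𝔻) (h0 : f 0 = 0) {z : ℂ} (hz : z ∈ 𝔻)
    (hd : deriv f z ≠ 0) :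
    HasDerivAt (fun τ : ℝ ↦ invFunOn f 𝔻 (f z * exp (-(exp (-(I * α)) * τ))))
      (spiralField α f z) 0 := by
  have hspiral : HasDerivAt (fun s : ℂ ↦ f z * exp (-(exp (-(I * α)) * s)))
      (-(exp (-(I * α)) * f z)) ((0 : ℝ) : ℂ) := by
    simpa [mul_comm] using
      ((hasDerivAt_id (0 : ℂ)).const_mul (exp (-(I * α)))).neg.cexp.const_mul (f z)
  have hinv : HasDerivAt (invFunOn f 𝔻) (deriv f z)⁻¹
      (f z * exp (-(exp (-(I * α)) * ((0 : ℝ) : ℂ)))) := by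
    simpa using hasDerivAt_invFunOn isOpen_ball hf hinj hz hd
  rw [spiralField_eq h0 hd, div_eq_inv_mul]
  exact (hinv.comp ((0 : ℝ) : ℂ) hspiral).comp_ofReal

theorem re_spiralQuotient_nonneg_of_spirallike (hf : DifferentiableOn ℂ f 𝔻)
    (h0 : f 0 = 0) (hsp : SpirallikeOfType α f) {z : ℂ} (hz : z ∈ 𝔻) (hz0 : z ≠ 0) :
    0 ≤ (spiralQuotient α f z).re := by
  rcases eq_or_ne (deriv f z) 0 with hd | hd
  · simp [spiralQuotient, hd]
  set W := fun τ : ℝ ↦ invFunOn f 𝔻 (f z * exp (-(exp (-(I * α)) * τ)))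
  have hW0 : W 0 = z := by simp [W, hsp.1.leftInvOn_invFunOn hz]
  have hmax : IsMaxOn (fun τ ↦ ‖W τ‖ ^ 2) (Ici 0) 0 := fun τ hτ ↦ by
    have := norm_invFunOn_mul_le hf hsp.1 h0
      (fun u hu ↦ hsp.2 _ (mem_image_of_mem f hu) τ hτ) hz
    simp only [mem_ofPred_eq, hW0]
    gcongr
  have hderiv : HasDerivAt (fun τ ↦ ‖W τ‖ ^ 2) (2 * ⟪W 0, spiralField α f z⟫) 0 :=
    (hasDerivAt_invFunOn_spiral hf hsp.1 h0 hz hd).norm_sq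
  have hinner := hderiv.nonpos_of_isMaxOn_Ici hmax
  rw [hW0, inner_spiralField] at hinner
  have hinv : 0 ≤ ((spiralQuotient α f z)⁻¹).re := by
    nlinarith [pow_pos (norm_pos_iff.2 hz0) 2]
  rw [← inv_inv (spiralQuotient α f z), inv_re]
  exact div_nonneg hinv (normSq_nonneg _)

theorem re_spiralQuotient_pos_of_spirallike (hcos : 0 < Real.cos α)
    (hf : DifferentiableOn ℂ f 𝔻) (h0 : f 0 = 0) (h1 : deriv f 0 = 1)
    (hsp : SpirallikeOfType α f) : ∀ z ∈ 𝔻, 0 < (spiralQuotient α f z).re := by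
  have hnz : ∀ z ∈ 𝔻, z ≠ 0 → f z ≠ 0 := fun z hz hz0 hfz ↦
    hz0 (hsp.1 hz (mem_ball_self one_pos) (hfz.trans h0.symm))
  have hQ0 : 0 < (spiralQuotient α f 0).re := (re_spiralQuotient_zero h1).symm ▸ hcos
  refine re_pos_of_re_nonneg (convex_ball 0 1).isPreconnected isOpen_ball
    (differentiableOn_spiralQuotient hf h0 h1 hnz) (fun z hz ↦ ?_) (mem_ball_self one_pos) hQ0
  rcases eq_or_ne z 0 with rfl | hz0
  exacts [hQ0.le, re_spiralQuotient_nonneg_of_spirallike hf h0 hsp hz hz0]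

theorem deriv_ne_zero_of_re_spiralQuotient_pos {z : ℂ} (h : 0 < (spiralQuotient α f z).re) :
    deriv f z ≠ 0 := fun hd ↦ by simp [spiralQuotient, hd] at h

theorem inner_spiralField_le {c : ℝ} {w : ℂ} (hw : c ≤ ((spiralQuotient α f w)⁻¹).re) :
    ⟪w, spiralField α f w⟫ ≤ -c * ‖w‖ ^ 2 := by
  rw [inner_spiralField]
  nlinarith [sq_nonneg ‖w‖]

theorem norm_lt_exp_of_hasDerivAt_spiralField {ρ c T : ℝ} (hT : 0 ≤ T)
    (hc : ∀ w ∈ closedBall (0 : ℂ) ρ, c ≤ ((spiralQuotient α f w)⁻¹).re) {γ : ℝ → ℂ}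
    (hγ0 : γ 0 ∈ 𝔻)
    (hγ : ∀ t ∈ Icc 0 T, ‖γ t‖ ≤ ρ ∧ HasDerivAt γ (spiralField α f (γ t)) t) :
    ‖γ T‖ < Real.exp (-(c * T)) := by
  have hanti := antitoneOn_exp_mul_norm_sq (fun t ht ↦ (hγ t ht).2)
    (fun t ht ↦ inner_spiralField_le (hc _ (mem_closedBall_zero_iff.2 (hγ t ht).1)))
  have hdecay := hanti ⟨le_rfl, hT⟩ ⟨hT, le_rfl⟩ hT
  simp only [mul_zero, Real.exp_zero, one_mul] at hdecay
  have hγ0' : ‖γ 0‖ ^ 2 < 1 := by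
    simpa using pow_lt_one₀ (norm_nonneg _) (mem_ball_zero_iff.1 hγ0) two_ne_zero
  refine (pow_lt_pow_iff_left₀ (norm_nonneg _) (Real.exp_pos _).le two_ne_zero).1 ?_
  calc ‖γ T‖ ^ 2 = Real.exp (-(2 * c * T)) * (Real.exp (2 * c * T) * ‖γ T‖ ^ 2) := by
        rw [← mul_assoc, ← Real.exp_add, neg_add_cancel, Real.exp_zero, one_mul]
    _ < Real.exp (-(2 * c * T)) * 1 := by gcongr; exact hdecay.trans_lt hγ0'
    _ = Real.exp (-(c * T)) ^ 2 := by rw [mul_one, ← Real.exp_nat_mul]; ring_nf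

theorem apply_eq_of_hasDerivAt_spiralField (hf : DifferentiableOn ℂ f 𝔻) (h0 : f 0 = 0)
    (hd : ∀ w ∈ 𝔻, deriv f w ≠ 0) {γ : ℝ → ℂ} {T : ℝ}
    (hγ : ∀ t ∈ Icc 0 T, γ t ∈ 𝔻 ∧ HasDerivAt γ (spiralField α f (γ t)) t) :
    ∀ t ∈ Icc 0 T, f (γ t) = f (γ 0) * exp (-(exp (-(I * α)) * t)) := by
  set k := exp (-(I * α)) with hk
  have hderiv : ∀ t ∈ Icc 0 T, HasDerivAt (fun t : ℝ ↦ exp (k * t) * f (γ t)) 0 t := by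
    intro t ht
    obtain ⟨hγB, hγt⟩ := hγ t ht
    have hexp : HasDerivAt (fun t : ℝ ↦ exp (k * t)) (exp (k * t) * k) t := by
      simpa using (((hasDerivAt_id (t : ℂ)).const_mul k).cexp).comp_ofReal
    have hfγ : HasDerivAt (fun t ↦ f (γ t)) (deriv f (γ t) * spiralField α f (γ t)) t :=
      (hf.differentiableAt (isOpen_ball.mem_nhds hγB)).hasDerivAt.comp t hγt
    refine (hexp.mul hfγ).congr_deriv ?_
    have hdγ := hd _ hγB
    rw [spiralField_eq h0 hdγ, ← hk]
    field_simp
    ring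
  intro t ht
  have hconst := constant_of_has_deriv_right_zero
    (fun t ht ↦ (hderiv t ht).continuousAt.continuousWithinAt)
    (fun t ht ↦ (hderiv t (Ico_subset_Icc_self ht)).hasDerivWithinAt) t ht
  rw [ofReal_zero, mul_zero, Complex.exp_zero, one_mul] at hconst
  rw [exp_neg, ← hconst]
  field_simp

section Backward

variable (hQ : ∀ z ∈ 𝔻, 0 < (spiralQuotient α f z).re)
  (hQd : DifferentiableOn ℂ (spiralQuotient α f) 𝔻)
include hQ hQd

theorem differentiableOn_inv_spiralQuotient :
    DifferentiableOn ℂ (fun z ↦ (spiralQuotient α f z)⁻¹) 𝔻 :=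
  hQd.inv fun z hz h ↦ by simpa [h] using hQ z hz

theorem exists_pos_le_re_inv_spiralQuotient {ρ : ℝ} (hρ0 : 0 ≤ ρ) (hρ : ρ < 1) :
    ∃ c > 0, ∀ w ∈ closedBall (0 : ℂ) ρ, c ≤ ((spiralQuotient α f w)⁻¹).re := by
  have hsub : closedBall (0 : ℂ) ρ ⊆ 𝔻 := closedBall_subset_ball hρ
  obtain ⟨w₀, hw₀, hmin⟩ := (isCompact_closedBall (0 : ℂ) ρ).exists_isMinOn
    ⟨0, mem_closedBall_self hρ0⟩ (continuous_re.comp_continuousOn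
      ((differentiableOn_inv_spiralQuotient hQ hQd).continuousOn.mono hsub))
  exact ⟨_, re_inv_pos_of_re_pos (hQ w₀ (hsub hw₀)), fun w hw ↦ hmin hw⟩

theorem contDiffOn_spiralField : ContDiffOn ℝ 1 (spiralField α f) 𝔻 :=
  ((differentiableOn_id.mul (differentiableOn_inv_spiralQuotient hQ hQd)).neg.contDiffOn
    isOpen_ball).restrict_scalars ℝ

theorem exists_spiral_flow (hf : DifferentiableOn ℂ f 𝔻) (h0 : f 0 = 0) {z : ℂ}
    (hz : z ∈ 𝔻) {T : ℝ} (hT : 0 ≤ T) :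
    ∃ γ : ℝ → ℂ, γ 0 = z ∧ ∀ t ∈ Icc 0 T, ‖γ t‖ ≤ ‖z‖ ∧
      HasDerivAt γ (spiralField α f (γ t)) t ∧ f (γ t) = f z * exp (-(exp (-(I * α)) * t)) := by
  obtain ⟨γ, hγ0, hγ⟩ := exists_forall_hasDerivAt_norm_le
    (contDiffOn_spiralField hQ hQd)
    (fun w hw ↦ by simpa using inner_spiralField_le (re_inv_pos_of_re_pos (hQ w hw)).le) hz hT
  have hγB : ∀ t ∈ Icc 0 T, γ t ∈ 𝔻 := fun t ht ↦
    mem_ball_zero_iff.2 ((hγ t ht).1.trans_lt (mem_ball_zero_iff.1 hz))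
  refine ⟨γ, hγ0, fun t ht ↦ ⟨(hγ t ht).1, (hγ t ht).2, ?_⟩⟩
  rw [← hγ0]
  exact apply_eq_of_hasDerivAt_spiralField hf h0
    (fun w hw ↦ deriv_ne_zero_of_re_spiralQuotient_pos (hQ w hw))
    (fun s hs ↦ ⟨hγB s hs, (hγ s hs).2⟩) t ht

theorem spiral_mem_image (hf : DifferentiableOn ℂ f 𝔻) (h0 : f 0 = 0) :
    ∀ w ∈ f '' 𝔻, ∀ τ : ℝ, 0 ≤ τ →
      w * exp (-(exp (-(I * α)) * τ)) ∈ f '' 𝔻 := by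
  rintro _ ⟨z, hz, rfl⟩ τ hτ
  obtain ⟨γ, -, hγ⟩ := exists_spiral_flow hQ hQd hf h0 hz hτ
  obtain ⟨hnorm, -, hγτ⟩ := hγ τ ⟨hτ, le_rfl⟩
  exact ⟨γ τ, mem_ball_zero_iff.2 (hnorm.trans_lt (mem_ball_zero_iff.1 hz)), hγτ⟩

theorem injOn_of_re_spiralQuotient_pos (hf : DifferentiableOn ℂ f 𝔻) (h0 : f 0 = 0)
    (h1 : deriv f 0 = 1) : InjOn f 𝔻 := by
  intro z₁ hz₁ z₂ hz₂ heq
  set ρ := max ‖z₁‖ ‖z₂‖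
  have hρ : ρ < 1 := max_lt (mem_ball_zero_iff.1 hz₁) (mem_ball_zero_iff.1 hz₂)
  obtain ⟨c, hc, hcle⟩ := exists_pos_le_re_inv_spiralQuotient hQ hQd
    ((norm_nonneg _).trans (le_max_left _ _)) hρ
  obtain ⟨K, hK⟩ := ((contDiffOn_spiralField hQ hQd).mono (closedBall_subset_ball hρ))
    |>.exists_lipschitzOnWith one_ne_zero (convex_closedBall 0 ρ) (isCompact_closedBall 0 ρ)
  obtain ⟨δ, hδ, hinj⟩ := (h1 ▸ (hf.analyticAt (ball_mem_nhds 0 one_pos)).hasStrictDerivAt)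
    |>.exists_injOn_ball one_ne_zero
  obtain ⟨T, hTδ, hT⟩ := (((Real.tendsto_exp_neg_atTop_nhds_zero.comp
    (tendsto_id.const_mul_atTop hc)).eventually (gt_mem_nhds hδ)).and
    (eventually_ge_atTop 0)).exists
  have hflow : ∀ z ∈ 𝔻, ‖z‖ ≤ ρ → ∃ γ : ℝ → ℂ, γ 0 = z ∧ γ T ∈ ball 0 δ ∧
      f (γ T) = f z * exp (-(exp (-(I * α)) * T)) ∧
      ∀ t ∈ Icc 0 T, γ t ∈ closedBall 0 ρ ∧ HasDerivAt γ (spiralField α f (γ t)) t := by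
    intro z hz hzρ
    obtain ⟨γ, hγ0, hγ⟩ := exists_spiral_flow hQ hQd hf h0 hz hT
    have hγρ : ∀ t ∈ Icc 0 T, ‖γ t‖ ≤ ρ ∧ HasDerivAt γ (spiralField α f (γ t)) t :=
      fun t ht ↦ ⟨(hγ t ht).1.trans hzρ, (hγ t ht).2.1⟩
    refine ⟨γ, hγ0, mem_ball_zero_iff.2 ?_, (hγ T ⟨hT, le_rfl⟩).2.2,
      fun t ht ↦ ⟨mem_closedBall_zero_iff.2 (hγρ t ht).1, (hγρ t ht).2⟩⟩
    exact (norm_lt_exp_of_hasDerivAt_spiralField hT hcle (hγ0 ▸ hz) hγρ).trans hTδ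
  obtain ⟨γ₁, hγ₁0, hγ₁δ, hγ₁T, hγ₁⟩ := hflow z₁ hz₁ (le_max_left _ _)
  obtain ⟨γ₂, hγ₂0, hγ₂δ, hγ₂T, hγ₂⟩ := hflow z₂ hz₂ (le_max_right _ _)
  rw [← hγ₁0, ← hγ₂0]
  exact ODE_solution_left_eq_of_right_eq hK hT hγ₁ hγ₂
    (hinj hγ₁δ hγ₂δ (by rw [hγ₁T, hγ₂T, heq]))

end Backward

end Spiral

theorem spacek_robertson_general (α : ℝ) (hα : α ∈ Set.Ioo (-(Real.pi / 2)) (Real.pi / 2))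
    (f : ℂ → ℂ) (hf : DifferentiableOn ℂ f (Metric.ball 0 1))
    (h0 : f 0 = 0) (h1 : deriv f 0 = 1) :
    SpirallikeOfType α f ↔
      ∀ z ∈ Metric.ball (0 : ℂ) 1, z ≠ 0 →
        0 < (Complex.exp (Complex.I * (α : ℂ)) * z * deriv f z / f z).re := by
  have hcos : 0 < Real.cos α := Real.cos_pos_of_mem_Ioo hα
  constructor
  · intro hsp z hz hz0
    rw [← spiralQuotient_of_ne_zero h0 hz0]
    exact re_spiralQuotient_pos_of_spirallike hcos hf h0 h1 hsp z hz
  · intro hre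
    have hnz : ∀ z ∈ 𝔻, z ≠ 0 → f z ≠ 0 := fun z hz hz0 hfz ↦ by
      simpa [hfz] using hre z hz hz0
    have hQ : ∀ z ∈ 𝔻, 0 < (spiralQuotient α f z).re := by
      intro z hz
      rcases eq_or_ne z 0 with rfl | hz0
      · rwa [re_spiralQuotient_zero h1]
      · rw [spiralQuotient_of_ne_zero h0 hz0]
        exact hre z hz hz0
    have hQd := differentiableOn_spiralQuotient (α := α) hf h0 h1 hnz
    exact ⟨injOn_of_re_spiralQuotient_pos hQ hQd hf h0 h1, spiral_mem_image hQ hQd hf h0⟩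

/-- Špaček–Robertson spirallikeness criterion: for `α ∈ (−π/2, π/2)` and `f`
holomorphic on `𝔻` with `f 0 = 0`, `f' 0 = 1`, `f z ≠ 0` for `z ≠ 0`, the function `f`
is spirallike of type `α` (in particular univalent) if and only if
`Re(e^{iα} z f'(z)/f(z)) > 0` for all `z ∈ 𝔻 \ {0}`. -/
theorem spacek_robertson (α : ℝ) (hα : α ∈ Set.Ioo (-(Real.pi / 2)) (Real.pi / 2))
    (f : ℂ → ℂ) (hf : DifferentiableOn ℂ f (Metric.ball 0 1))
    (h0 : f 0 = 0) (h1 : deriv f 0 = 1)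
    (hnz : ∀ z ∈ Metric.ball (0 : ℂ) 1, z ≠ 0 → f z ≠ 0) :
    SpirallikeOfType α f ↔
      ∀ z ∈ Metric.ball (0 : ℂ) 1, z ≠ 0 →
        0 < (Complex.exp (Complex.I * (α : ℂ)) * z * deriv f z / f z).re :=
  spacek_robertson_general α hα f hf h0 h1

end
end

section
/- Becker's univalence criterion: let f be holomorphic on 𝔻 with f(z) = z + a₂z² + ⋯ (f(0) = 0, f'(0) = 1) and f'(z) ≠ 0 for all z ∈ 𝔻. If there exists k with 0 ≤ k < 1 such that (1 − |z|²)·|z f''(z)/f'(z)| ≤ k for all z ∈ 𝔻, then f is injective on 𝔻. -/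
/-!
Becker's Loewner chain `L t z = f (e⁻ᵗ z) + (eᵗ - e⁻ᵗ) z f'(e⁻ᵗ z)` starts at `L 0 = f`.
With `u = e⁻ᵗ z` and `q = (1 - e⁻²ᵗ) u f''(u) / f'(u)` one has `∂ₜ L = eᵗ f'(u) (1 - q) z` and
`∂_z L = eᵗ f'(u) (1 + q)`, and Becker's hypothesis gives `‖q‖ ≤ k < 1` on the disk. Hence `L`
is constant along the solutions of `γ' = -γ (1 - q) / (1 + q)`; this field points into every
disk `‖z‖ ≤ r`, so the solutions starting in `𝔻` exist on every `[0, T]` and never leave their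
initial disk. For large `T`, `e⁻ᵀ ∂_z L T` is uniformly close to `f'(0)` on `𝔻`, so `L T` is
injective there. If `f a = f b`, the solutions starting at `a` and `b` therefore meet at time
`T`, and backward uniqueness for the locally Lipschitz field forces `a = b`.
-/

open Complex Metric Set

noncomputable section

open Filter

open scoped NNReal RealInnerProductSpace ComplexConjugate Topology

section RadialRetraction

variable {E : Type*} [NormedAddCommGroup E] [NormedSpace ℝ E]

def radialRetraction (R : ℝ) (x : E) : E := (R / max R ‖x‖) • x

lemma radialRetraction_of_norm_le {R : ℝ} {x : E} (hx : ‖x‖ ≤ R) :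
    radialRetraction R x = x := by
  rcases (norm_nonneg x).trans hx |>.eq_or_lt with rfl | hR
  · simp [radialRetraction, norm_le_zero_iff.1 hx]
  · simp [radialRetraction, max_eq_left hx, hR.ne']

lemma norm_radialRetraction_le {R : ℝ} (hR : 0 ≤ R) (x : E) : ‖radialRetraction R x‖ ≤ R := by
  rcases hR.eq_or_lt with rfl | hR
  · simp [radialRetraction]
  have hM : 0 < max R ‖x‖ := lt_max_of_lt_left hR
  rw [radialRetraction, norm_smul, Real.norm_of_nonneg (by positivity), div_mul_eq_mul_div,
    div_le_iff₀ hM]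
  exact mul_le_mul_of_nonneg_left (le_max_right _ _) hR.le

lemma lipschitzWith_radialRetraction {R : ℝ} (hR : 0 < R) :
    LipschitzWith 2 (radialRetraction (E := E) R) := by
  refine LipschitzWith.of_dist_le_mul fun x y => ?_
  wlog hxy : ‖y‖ ≤ ‖x‖ generalizing x y
  · rw [dist_comm, dist_comm x]; exact this y x (le_of_not_ge hxy)
  set Mx := max R ‖x‖
  set My := max R ‖y‖
  have hMy : 0 < My := lt_max_of_lt_left hR
  have hMxy : My ≤ Mx := max_le_max le_rfl hxy
  have hMx : 0 < Mx := hMy.trans_le hMxy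
  have hsplit : radialRetraction R x - radialRetraction R y
      = (R / Mx) • (x - y) - (R / My - R / Mx) • y := by
    simp only [radialRetraction, smul_sub, sub_smul]; abel
  have h1 : ‖(R / Mx) • (x - y)‖ ≤ ‖x - y‖ := by
    rw [norm_smul, Real.norm_of_nonneg (by positivity)]
    exact mul_le_of_le_one_left (norm_nonneg _) ((div_le_one hMx).2 (le_max_left _ _))
  have h2 : ‖(R / My - R / Mx) • y‖ ≤ ‖x - y‖ := by
    have hcoef : 0 ≤ R / My - R / Mx := sub_nonneg.2 (div_le_div_of_nonneg_left hR.le hMy hMxy)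
    rw [norm_smul, Real.norm_of_nonneg hcoef]
    calc (R / My - R / Mx) * ‖y‖ = (Mx - My) * (R / Mx) * (‖y‖ / My) := by
          field_simp
      _ ≤ (Mx - My) * 1 * 1 := by
          gcongr
          · exact (div_le_one hMx).2 (le_max_left _ _)
          · exact (div_le_one hMy).2 (le_max_right _ _)
      _ ≤ ‖x - y‖ := by
          have hMx_le : Mx ≤ My + ‖x - y‖ :=
            max_le (by linarith [le_max_left R ‖y‖, norm_nonneg (x - y)])
              (by linarith [le_max_right R ‖y‖, norm_sub_norm_le x y])
          linarith
  rw [dist_eq_norm, dist_eq_norm, hsplit, NNReal.coe_ofNat, two_mul]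
  exact (norm_sub_le _ _).trans (add_le_add h1 h2)

end RadialRetraction

lemma inner_radialRetraction_nonpos {F : Type*} [NormedAddCommGroup F] [InnerProductSpace ℝ F]
    {R : ℝ} (hR : 0 < R) {v : F → F} (hv : ∀ y ∈ closedBall (0 : F) R, ⟪y, v y⟫ ≤ 0)
    (x : F) : ⟪x, v (radialRetraction R x)⟫ ≤ 0 := by
  have hM : 0 < max R ‖x‖ := lt_max_of_lt_left hR
  have hx : x = (max R ‖x‖ / R) • radialRetraction R x := by
    rw [radialRetraction, smul_smul, div_mul_div_comm, mul_comm, div_self (by positivity),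
      one_smul]
  calc ⟪x, v (radialRetraction R x)⟫
      = (max R ‖x‖ / R) * ⟪radialRetraction R x, v (radialRetraction R x)⟫ := by
        rw [← real_inner_smul_left, ← hx]
    _ ≤ 0 := mul_nonpos_of_nonneg_of_nonpos (by positivity)
        (hv _ (mem_closedBall_zero_iff.2 (norm_radialRetraction_le hR.le x)))

lemma norm_antitoneOn_of_inner_deriv_nonpos {F : Type*} [NormedAddCommGroup F]
    [InnerProductSpace ℝ F] {γ γ' : ℝ → F} {a b : ℝ}
    (hγ : ∀ t ∈ Icc a b, HasDerivWithinAt γ (γ' t) (Icc a b) t)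
    (hinner : ∀ t ∈ Icc a b, ⟪γ t, γ' t⟫ ≤ 0) : AntitoneOn (‖γ ·‖) (Icc a b) := by
  have hsq : AntitoneOn (‖γ ·‖ ^ 2) (Icc a b) := by
    refine antitoneOn_of_hasDerivWithinAt_nonpos (f' := fun t => 2 * ⟪γ t, γ' t⟫)
      (convex_Icc a b) ?_ (fun t ht => ?_) (fun t ht => ?_)
    · exact fun t ht => (hγ t ht).norm_sq.continuousWithinAt
    · exact ((hγ t (interior_subset ht)).norm_sq).mono interior_subset
    · have := hinner t (interior_subset ht); linarith
  intro s hs t ht hst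
  exact (pow_le_pow_iff_left₀ (norm_nonneg _) (norm_nonneg _) two_ne_zero).1 (hsq hs ht hst)

lemma exists_isIntegralCurveOn_Icc_of_lipschitzWith {E : Type*} [NormedAddCommGroup E]
    [NormedSpace ℝ E] [CompleteSpace E] {v : ℝ → E → E} {a b : ℝ} (hab : a ≤ b) {K C : ℝ≥0}
    (hlip : ∀ t ∈ Icc a b, LipschitzWith K (v t))
    (hcont : ∀ x, ContinuousOn (v · x) (Icc a b))
    (hbound : ∀ t ∈ Icc a b, ∀ x, ‖v t x‖ ≤ C) (x₀ : E) :
    ∃ γ : ℝ → E, γ a = x₀ ∧ IsIntegralCurveOn γ v (Icc a b) := by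
  have hpl : IsPicardLindelof v (⟨a, left_mem_Icc.2 hab⟩ : Icc a b) x₀
      (C * ⟨b - a, sub_nonneg.2 hab⟩) 0 C K :=
    { lipschitzOnWith := fun t ht => (hlip t ht).lipschitzOnWith
      continuousOn := fun x _ => hcont x
      norm_le := fun t ht x _ => hbound t ht x
      mul_max_le := by simp [hab]; rfl }
  exact hpl.exists_eq_forall_mem_Icc_hasDerivWithinAt₀

lemma IsIntegralCurveOn.eqOn_Icc_of_eq_right {E : Type*} [NormedAddCommGroup E]
    [NormedSpace ℝ E] {v : ℝ → E → E} {a b : ℝ} {s : Set E} {K : ℝ≥0}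
    (hv : ∀ t ∈ Icc a b, LipschitzOnWith K (v t) s) {γ₁ γ₂ : ℝ → E}
    (h₁ : IsIntegralCurveOn γ₁ v (Icc a b)) (h₂ : IsIntegralCurveOn γ₂ v (Icc a b))
    (hs₁ : ∀ t ∈ Icc a b, γ₁ t ∈ s) (hs₂ : ∀ t ∈ Icc a b, γ₂ t ∈ s) (hb : γ₁ b = γ₂ b) :
    EqOn γ₁ γ₂ (Icc a b) :=
  ODE_solution_unique_of_mem_Icc_left (s := fun _ => s)
    (fun t ht => hv t (Ioc_subset_Icc_self ht)) h₁.continuousOn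
    (fun t ht => (h₁ t (Ioc_subset_Icc_self ht)).mono_of_mem_nhdsWithin
      (Icc_mem_nhdsLE_of_mem ht))
    (fun t ht => hs₁ t (Ioc_subset_Icc_self ht)) h₂.continuousOn
    (fun t ht => (h₂ t (Ioc_subset_Icc_self ht)).mono_of_mem_nhdsWithin
      (Icc_mem_nhdsLE_of_mem ht))
    (fun t ht => hs₂ t (Ioc_subset_Icc_self ht)) hb

lemma exists_lipschitzOnWith_of_contDiffOn_uncurry {G E F : Type*} [NormedAddCommGroup G]
    [NormedSpace ℝ G] [NormedAddCommGroup E] [NormedSpace ℝ E] [NormedAddCommGroup F]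
    [NormedSpace ℝ F] {v : G → E → F} {s : Set G} {u : Set E}
    (hv : ContDiffOn ℝ 1 (Function.uncurry v) (s ×ˢ u)) (hs : Convex ℝ s) (hsc : IsCompact s)
    (hu : Convex ℝ u) (huc : IsCompact u) : ∃ K, ∀ τ ∈ s, LipschitzOnWith K (v τ) u := by
  obtain ⟨K, hK⟩ := hv.exists_lipschitzOnWith one_ne_zero (hs.prod hu) (hsc.prod huc)
  refine ⟨K, fun τ hτ => ?_⟩
  have := hK.comp (LipschitzWith.prodMk_left τ).lipschitzOnWith fun x hx => ⟨hτ, hx⟩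
  rwa [mul_one] at this

lemma injOn_of_norm_hasDerivAt_sub_le {𝕜 G : Type*} [RCLike 𝕜] [NormedAddCommGroup G]
    [NormedSpace 𝕜 G] {φ φ' : 𝕜 → G} {s : Set 𝕜} (hs : Convex ℝ s) {c : G} {C : ℝ}
    (hφ : ∀ z ∈ s, HasDerivAt φ (φ' z) z) (hbound : ∀ z ∈ s, ‖φ' z - c‖ ≤ C)
    (hC : C < ‖c‖) : InjOn φ s := by
  intro x hx y hy hxy
  have hmvt := hs.norm_image_sub_le_of_norm_hasDerivWithin_le (f := fun z => φ z - z • c)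
    (fun z hz => ((hφ z hz).sub ((hasDerivAt_id z).smul_const c)).hasDerivWithinAt)
    (by simpa using hbound) hx hy
  by_contra hne
  have hyx : 0 < ‖y - x‖ := norm_pos_iff.2 (sub_ne_zero.2 (Ne.symm hne))
  have : ‖(φ y - y • c) - (φ x - x • c)‖ = ‖y - x‖ * ‖c‖ := by
    rw [hxy, sub_sub_sub_cancel_left, ← sub_smul, norm_smul, norm_sub_rev]
  nlinarith

lemma one_add_ne_zero_of_norm_lt_one {q : ℂ} (hq : ‖q‖ < 1) : 1 + q ≠ 0 := by
  intro h
  rw [← neg_eq_of_add_eq_zero_right h, norm_neg, norm_one] at hq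
  exact lt_irrefl 1 hq

lemma re_one_sub_div_one_add_nonneg {q : ℂ} (hq : ‖q‖ ≤ 1) : 0 ≤ ((1 - q) / (1 + q)).re := by
  have hq2 : q.re * q.re + q.im * q.im ≤ 1 := by
    rw [← normSq_apply, ← Complex.sq_norm]; nlinarith [norm_nonneg q]
  rw [div_re, ← add_div]
  apply div_nonneg _ (normSq_nonneg _)
  simp only [sub_re, add_re, one_re, sub_im, add_im, one_im]
  nlinarith

lemma inner_neg_mul_one_sub_div_one_add_nonpos (z : ℂ) {q : ℂ} (hq : ‖q‖ ≤ 1) :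
    ⟪z, -(z * (1 - q) / (1 + q))⟫ ≤ 0 := by
  have h : -(z * (1 - q) / (1 + q)) * conj z = -((normSq z : ℂ) * ((1 - q) / (1 + q))) := by
    rw [← mul_conj]; ring
  rw [Complex.inner, h, neg_re, re_ofReal_mul, neg_nonpos]
  exact mul_nonneg (normSq_nonneg z) (re_one_sub_div_one_add_nonneg hq)

lemma norm_exp_neg_mul (t : ℝ) (z : ℂ) : ‖(Real.exp (-t) : ℂ) * z‖ = Real.exp (-t) * ‖z‖ := by
  rw [norm_mul, norm_real, Real.norm_of_nonneg (Real.exp_pos _).le]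

lemma norm_exp_neg_mul_le {t : ℝ} (ht : 0 ≤ t) (z : ℂ) : ‖(Real.exp (-t) : ℂ) * z‖ ≤ ‖z‖ := by
  rw [norm_exp_neg_mul]
  exact mul_le_of_le_one_left (norm_nonneg z) (Real.exp_le_one_iff.2 (neg_nonpos.2 ht))

lemma exp_neg_mul_mem_ball {t : ℝ} (ht : 0 ≤ t) {z : ℂ} {r : ℝ} (hz : z ∈ ball (0 : ℂ) r) :
    (Real.exp (-t) : ℂ) * z ∈ ball (0 : ℂ) r :=
  mem_ball_zero_iff.2 ((norm_exp_neg_mul_le ht z).trans_lt (mem_ball_zero_iff.1 hz))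

lemma norm_one_sub_exp_neg_sq {t : ℝ} (ht : 0 ≤ t) :
    ‖(1 - Real.exp (-t) ^ 2 : ℂ)‖ = 1 - Real.exp (-t) ^ 2 := by
  rw [← ofReal_pow, ← ofReal_one, ← ofReal_sub, norm_real, Real.norm_of_nonneg]
  nlinarith [Real.exp_le_one_iff.2 (neg_nonpos.2 ht), Real.exp_pos (-t)]

section Becker

variable {f : ℂ → ℂ}

def beckerChain (f : ℂ → ℂ) (t : ℝ) (z : ℂ) : ℂ :=
  f (Real.exp (-t) * z) + (Real.exp t - Real.exp (-t)) * z * deriv f (Real.exp (-t) * z)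

def beckerCoeff (f : ℂ → ℂ) (t : ℝ) (z : ℂ) : ℂ :=
  (1 - Real.exp (-t) ^ 2) *
    (Real.exp (-t) * z * deriv (deriv f) (Real.exp (-t) * z) / deriv f (Real.exp (-t) * z))

def beckerField (f : ℂ → ℂ) (t : ℝ) (z : ℂ) : ℂ :=
  -(z * (1 - beckerCoeff f t z) / (1 + beckerCoeff f t z))

lemma norm_beckerCoeff_le {k : ℝ}
    (hbd : ∀ z ∈ ball (0 : ℂ) 1, (1 - ‖z‖ ^ 2) * ‖z * deriv (deriv f) z / deriv f z‖ ≤ k)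
    {t : ℝ} (ht : 0 ≤ t) {z : ℂ} (hz : z ∈ ball (0 : ℂ) 1) : ‖beckerCoeff f t z‖ ≤ k := by
  set u : ℂ := Real.exp (-t) * z
  have hu : ‖u‖ ≤ Real.exp (-t) := by
    rw [norm_exp_neg_mul]
    exact mul_le_of_le_one_right (Real.exp_pos _).le (mem_ball_zero_iff.1 hz).le
  calc ‖beckerCoeff f t z‖
      = (1 - Real.exp (-t) ^ 2) * ‖u * deriv (deriv f) u / deriv f u‖ := by
        rw [beckerCoeff, norm_mul, norm_one_sub_exp_neg_sq ht]
    _ ≤ (1 - ‖u‖ ^ 2) * ‖u * deriv (deriv f) u / deriv f u‖ := by gcongr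
    _ ≤ k := hbd u (exp_neg_mul_mem_ball ht hz)

lemma contDiffOn_beckerField {k : ℝ} (hf : DifferentiableOn ℂ f (ball 0 1))
    (hnz : ∀ z ∈ ball (0 : ℂ) 1, deriv f z ≠ 0) (hk1 : k < 1)
    (hbd : ∀ z ∈ ball (0 : ℂ) 1, (1 - ‖z‖ ^ 2) * ‖z * deriv (deriv f) z / deriv f z‖ ≤ k) :
    ContDiffOn ℝ 1 (Function.uncurry (beckerField f)) (Ici 0 ×ˢ ball 0 1) := by
  have hexp : ContDiff ℝ 1 (fun p : ℝ × ℂ => (Real.exp (-p.1) : ℂ)) :=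
    ofRealCLM.contDiff.comp (Real.contDiff_exp.comp contDiff_fst.neg)
  set u : ℝ × ℂ → ℂ := fun p => Real.exp (-p.1) * p.2
  have hu : ContDiffOn ℝ 1 u (Ici 0 ×ˢ ball 0 1) := (hexp.mul contDiff_snd).contDiffOn
  have hmaps : MapsTo u (Ici 0 ×ˢ ball 0 1) (ball 0 1) := fun p hp =>
    exp_neg_mul_mem_ball hp.1 hp.2
  have hf₁ : ContDiffOn ℝ 1 (fun p => deriv f (u p)) (Ici 0 ×ˢ ball 0 1) :=
    (((hf.deriv isOpen_ball).contDiffOn isOpen_ball).restrict_scalars ℝ).comp hu hmaps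
  have hf₂ : ContDiffOn ℝ 1 (fun p => deriv (deriv f) (u p)) (Ici 0 ×ˢ ball 0 1) :=
    ((((hf.deriv isOpen_ball).deriv isOpen_ball).contDiffOn isOpen_ball).restrict_scalars ℝ).comp
      hu hmaps
  have hq : ContDiffOn ℝ 1 (fun p : ℝ × ℂ => beckerCoeff f p.1 p.2) (Ici 0 ×ˢ ball 0 1) := by
    simp only [beckerCoeff, div_eq_mul_inv]
    exact (contDiffOn_const.sub (hexp.pow 2).contDiffOn).mul
      ((hu.mul hf₂).mul (hf₁.inv fun p hp => hnz _ (hmaps hp)))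
  have hden : ∀ p ∈ Ici (0 : ℝ) ×ˢ ball (0 : ℂ) 1, 1 + beckerCoeff f p.1 p.2 ≠ 0 :=
    fun p hp => one_add_ne_zero_of_norm_lt_one ((norm_beckerCoeff_le hbd hp.1 hp.2).trans_lt hk1)
  simp only [Function.uncurry_def, beckerField, div_eq_mul_inv]
  exact ((contDiffOn_snd.mul (contDiffOn_const.sub hq)).mul
    (contDiffOn_const.add hq |>.inv hden)).neg

lemma exists_lipschitzOnWith_beckerField {k : ℝ} (hf : DifferentiableOn ℂ f (ball 0 1))
    (hnz : ∀ z ∈ ball (0 : ℂ) 1, deriv f z ≠ 0) (hk1 : k < 1)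
    (hbd : ∀ z ∈ ball (0 : ℂ) 1, (1 - ‖z‖ ^ 2) * ‖z * deriv (deriv f) z / deriv f z‖ ≤ k)
    (T : ℝ) {R : ℝ} (hR : R < 1) :
    ∃ K, ∀ t ∈ Icc 0 T, LipschitzOnWith K (beckerField f t) (closedBall 0 R) :=
  exists_lipschitzOnWith_of_contDiffOn_uncurry
    ((contDiffOn_beckerField hf hnz hk1 hbd).mono
      (prod_mono Icc_subset_Ici_self (closedBall_subset_ball hR)))
    (convex_Icc 0 T) isCompact_Icc (convex_closedBall 0 R) (isCompact_closedBall 0 R)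

lemma exists_isIntegralCurveOn_beckerField {k : ℝ} (hf : DifferentiableOn ℂ f (ball 0 1))
    (hnz : ∀ z ∈ ball (0 : ℂ) 1, deriv f z ≠ 0) (hk1 : k < 1)
    (hbd : ∀ z ∈ ball (0 : ℂ) 1, (1 - ‖z‖ ^ 2) * ‖z * deriv (deriv f) z / deriv f z‖ ≤ k)
    {T : ℝ} (hT : 0 ≤ T) {a : ℂ} (ha : a ∈ ball (0 : ℂ) 1) :
    ∃ γ : ℝ → ℂ, γ 0 = a ∧ IsIntegralCurveOn γ (beckerField f) (Icc 0 T) ∧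
      ∀ t ∈ Icc 0 T, ‖γ t‖ ≤ ‖a‖ := by
  -- `beckerField f t` is Lipschitz only on compact subdisks. Composed with the radial retraction
  -- onto `closedBall 0 R` it becomes globally Lipschitz and bounded, so Picard-Lindelöf gives a
  -- solution on all of `[0, T]`; as the field points inwards, that solution stays in
  -- `closedBall 0 ‖a‖`, where the retraction is the identity.
  obtain ⟨R, haR, hR1⟩ := exists_between (mem_ball_zero_iff.1 ha)
  have hR0 : 0 < R := (norm_nonneg a).trans_lt haR
  have hmem : ∀ x : ℂ, radialRetraction R x ∈ closedBall 0 R := fun x =>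
    mem_closedBall_zero_iff.2 (norm_radialRetraction_le hR0.le x)
  have hS : Icc 0 T ×ˢ closedBall 0 R ⊆ Ici (0 : ℝ) ×ˢ ball (0 : ℂ) 1 :=
    prod_mono Icc_subset_Ici_self (closedBall_subset_ball hR1)
  have hcd := (contDiffOn_beckerField hf hnz hk1 hbd).mono hS
  obtain ⟨K, hK⟩ := exists_lipschitzOnWith_beckerField hf hnz hk1 hbd T hR1
  obtain ⟨C, hC⟩ := (isCompact_Icc.prod (isCompact_closedBall 0 R)).exists_bound_of_continuousOn
    hcd.continuousOn
  have hlip : ∀ t ∈ Icc 0 T,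
      LipschitzWith (K * 2) (fun x => beckerField f t (radialRetraction R x)) :=
    fun t ht => lipschitzOnWith_univ.1 <|
      (hK t ht).comp (lipschitzWith_radialRetraction hR0).lipschitzOnWith fun x _ => hmem x
  have hcont : ∀ x : ℂ,
      ContinuousOn (fun t => beckerField f t (radialRetraction R x)) (Icc 0 T) := fun x =>
    hcd.continuousOn.comp (f := fun t => (t, radialRetraction R x)) (by fun_prop)
      fun t ht => ⟨ht, hmem x⟩
  have hbound : ∀ t ∈ Icc 0 T, ∀ x, ‖beckerField f t (radialRetraction R x)‖ ≤ C.toNNReal :=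
    fun t ht x => (hC (t, _) ⟨ht, hmem x⟩).trans (Real.le_coe_toNNReal C)
  obtain ⟨γ, hγ0, hγ⟩ := exists_isIntegralCurveOn_Icc_of_lipschitzWith hT hlip hcont hbound a
  have hnorm : ∀ t ∈ Icc 0 T, ‖γ t‖ ≤ ‖a‖ := by
    intro t ht
    rw [← hγ0]
    refine norm_antitoneOn_of_inner_deriv_nonpos hγ (fun t ht => ?_) (left_mem_Icc.2 hT) ht ht.1
    refine inner_radialRetraction_nonpos hR0 (fun y hy => ?_) (γ t)
    exact inner_neg_mul_one_sub_div_one_add_nonpos y <| (norm_beckerCoeff_le hbd ht.1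
      (closedBall_subset_ball hR1 hy)).trans hk1.le
  refine ⟨γ, hγ0, fun t ht => ?_, hnorm⟩
  have : HasDerivWithinAt γ (beckerField f t (radialRetraction R (γ t))) (Icc 0 T) t := hγ t ht
  rwa [radialRetraction_of_norm_le ((hnorm t ht).trans haR.le)] at this

lemma hasDerivWithinAt_beckerChain_comp (hf : DifferentiableOn ℂ f (ball 0 1))
    {γ : ℝ → ℂ} {γ' : ℂ} {s : Set ℝ} {t : ℝ} (hγ : HasDerivWithinAt γ γ' s t)
    (hu : (Real.exp (-t) : ℂ) * γ t ∈ ball (0 : ℂ) 1) (hnz : deriv f (Real.exp (-t) * γ t) ≠ 0) :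
    HasDerivWithinAt (fun τ => beckerChain f τ (γ τ))
      (Real.exp t * deriv f (Real.exp (-t) * γ t) *
        ((1 + beckerCoeff f t (γ t)) * γ' + (1 - beckerCoeff f t (γ t)) * γ t)) s t := by
  have hexp : HasDerivAt (fun τ : ℝ => (Real.exp τ : ℂ)) (Real.exp t) t :=
    (Real.hasDerivAt_exp t).ofReal_comp
  have hexp_neg : HasDerivAt (fun τ : ℝ => (Real.exp (-τ) : ℂ)) (-Real.exp (-t)) t := by
    simpa using ((hasDerivAt_neg t).exp).ofReal_comp
  have hf₁ := (hf.differentiableAt (isOpen_ball.mem_nhds hu)).hasDerivAt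
  have hf₂ := ((hf.deriv isOpen_ball).differentiableAt (isOpen_ball.mem_nhds hu)).hasDerivAt
  have hu' := hexp_neg.hasDerivWithinAt.mul hγ
  have hL := (hf₁.comp_hasDerivWithinAt t hu').add
    (((hexp.sub hexp_neg).hasDerivWithinAt.mul hγ).mul (hf₂.comp_hasDerivWithinAt t hu'))
  refine hL.congr_deriv ?_
  have hinv : (Real.exp t : ℂ) * Real.exp (-t) = 1 := by
    rw [← ofReal_mul, ← Real.exp_add, add_neg_cancel, Real.exp_zero, ofReal_one]
  simp only [Pi.mul_apply, Pi.sub_apply, Function.comp_apply, beckerCoeff]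
  field_simp
  linear_combination ((Real.exp (-t) : ℂ) ^ 2 * γ t * deriv (deriv f) (Real.exp (-t) * γ t) *
    (γ' - γ t)) * hinv

lemma beckerChain_eq_of_isIntegralCurveOn {k : ℝ} (hf : DifferentiableOn ℂ f (ball 0 1))
    (hnz : ∀ z ∈ ball (0 : ℂ) 1, deriv f z ≠ 0) (hk1 : k < 1)
    (hbd : ∀ z ∈ ball (0 : ℂ) 1, (1 - ‖z‖ ^ 2) * ‖z * deriv (deriv f) z / deriv f z‖ ≤ k)
    {T : ℝ} (hT : 0 ≤ T) {γ : ℝ → ℂ} (hγ : IsIntegralCurveOn γ (beckerField f) (Icc 0 T))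
    (hmem : ∀ t ∈ Icc 0 T, γ t ∈ ball (0 : ℂ) 1) : beckerChain f T (γ T) = f (γ 0) := by
  have hderiv : ∀ t ∈ Icc 0 T,
      HasDerivWithinAt (fun τ => beckerChain f τ (γ τ)) 0 (Icc 0 T) t := by
    intro t ht
    have hu := exp_neg_mul_mem_ball ht.1 (hmem t ht)
    have hq := one_add_ne_zero_of_norm_lt_one
      ((norm_beckerCoeff_le hbd ht.1 (hmem t ht)).trans_lt hk1)
    convert hasDerivWithinAt_beckerChain_comp hf (hγ t ht) hu (hnz _ hu) using 1
    rw [beckerField]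
    field_simp
    ring
  have := (convex_Icc 0 T).norm_image_sub_le_of_norm_hasDerivWithin_le hderiv
    (fun _ _ => norm_zero.le) (left_mem_Icc.2 hT) (right_mem_Icc.2 hT)
  simpa [beckerChain, sub_eq_zero] using this

lemma hasDerivAt_beckerChain (hf : DifferentiableOn ℂ f (ball 0 1)) (t : ℝ) {z : ℂ}
    (hu : (Real.exp (-t) : ℂ) * z ∈ ball (0 : ℂ) 1) :
    HasDerivAt (beckerChain f t) (Real.exp t * (deriv f (Real.exp (-t) * z) +
      (1 - Real.exp (-t) ^ 2) * (Real.exp (-t) * z * deriv (deriv f) (Real.exp (-t) * z)))) z := by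
  have hmul : HasDerivAt (fun z : ℂ => (Real.exp (-t) : ℂ) * z) (Real.exp (-t)) z := by
    simpa using (hasDerivAt_id z).const_mul (Real.exp (-t) : ℂ)
  have hf₁ := (hf.differentiableAt (isOpen_ball.mem_nhds hu)).hasDerivAt
  have hf₂ := ((hf.deriv isOpen_ball).differentiableAt (isOpen_ball.mem_nhds hu)).hasDerivAt
  have h := (hf₁.comp z hmul).add
    (((hasDerivAt_id z).const_mul ((Real.exp t : ℂ) - Real.exp (-t))).mul (hf₂.comp z hmul))
  refine h.congr_deriv ?_
  have hinv : (Real.exp t : ℂ) * Real.exp (-t) = 1 := by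
    rw [← ofReal_mul, ← Real.exp_add, add_neg_cancel, Real.exp_zero, ofReal_one]
  simp only [Function.comp_apply, id, mul_one]
  linear_combination ((Real.exp (-t) : ℂ) ^ 2 * z * deriv (deriv f) (Real.exp (-t) * z)) * hinv

lemma exists_injOn_beckerChain (hf : DifferentiableOn ℂ f (ball 0 1)) (h0 : deriv f 0 ≠ 0) :
    ∃ T, 0 ≤ T ∧ InjOn (beckerChain f T) (ball 0 1) := by
  set c := ‖deriv f 0‖
  have hc : 0 < c := norm_pos_iff.2 h0
  have hf₁ : ContinuousAt (deriv f) 0 :=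
    (hf.deriv isOpen_ball).continuousOn.continuousAt (ball_mem_nhds 0 one_pos)
  have hf₂ : Tendsto (fun u => u * deriv (deriv f) u) (𝓝 0) (𝓝 0) := by
    simpa [Pi.mul_def] using (continuousAt_id.mul
      (((hf.deriv isOpen_ball).deriv isOpen_ball).continuousOn.continuousAt
        (ball_mem_nhds 0 one_pos))).tendsto
  obtain ⟨δ, hδ, hnear⟩ := Metric.eventually_nhds_iff_ball.1 <|
    (isOpen_ball.eventually_mem (mem_ball_self one_pos)).and <|
      (Metric.tendsto_nhds.1 hf₁ _ (by positivity : 0 < c / 4)).and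
        (Metric.tendsto_nhds.1 hf₂ _ (by positivity : 0 < c / 4))
  obtain ⟨T, hTδ, hT⟩ := ((Real.tendsto_exp_neg_atTop_nhds_zero.eventually (gt_mem_nhds hδ)).and
    (eventually_ge_atTop 0)).exists
  have hnear' : ∀ z ∈ ball (0 : ℂ) 1, (Real.exp (-T) : ℂ) * z ∈ ball (0 : ℂ) δ := fun z hz =>
    mem_ball_zero_iff.2 <| (norm_exp_neg_mul T z).trans_lt <|
      (mul_le_of_le_one_right (Real.exp_pos _).le (mem_ball_zero_iff.1 hz).le).trans_lt hTδ
  have hcoeff : ‖(1 - Real.exp (-T) ^ 2 : ℂ)‖ ≤ 1 := by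
    rw [norm_one_sub_exp_neg_sq hT]; linarith [sq_nonneg (Real.exp (-T))]
  refine ⟨T, hT, injOn_of_norm_hasDerivAt_sub_le (convex_ball 0 1) (c := Real.exp T * deriv f 0)
    (C := Real.exp T * (c / 2)) (fun z hz => hasDerivAt_beckerChain hf T (hnear _ (hnear' z hz)).1)
    (fun z hz => ?_) ?_⟩
  · obtain ⟨-, h₁, h₂⟩ := hnear _ (hnear' z hz)
    rw [dist_eq_norm] at h₁
    rw [dist_zero_right] at h₂
    set u : ℂ := Real.exp (-T) * z
    calc ‖Real.exp T * (deriv f u + (1 - Real.exp (-T) ^ 2) * (u * deriv (deriv f) u)) -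
          Real.exp T * deriv f 0‖
        = Real.exp T * ‖(deriv f u - deriv f 0) +
            (1 - Real.exp (-T) ^ 2) * (u * deriv (deriv f) u)‖ := by
          rw [← mul_sub, norm_mul, norm_real, Real.norm_of_nonneg (Real.exp_pos _).le]
          ring_nf
      _ ≤ Real.exp T * (c / 4 + 1 * (c / 4)) := by
          gcongr
          refine (norm_add_le _ _).trans (add_le_add h₁.le ?_)
          rw [norm_mul]
          exact mul_le_mul hcoeff h₂.le (norm_nonneg _) zero_le_one
      _ = Real.exp T * (c / 2) := by ring
  · rw [norm_mul, norm_real, Real.norm_of_nonneg (Real.exp_pos _).le]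
    exact mul_lt_mul_of_pos_left (by linarith) (Real.exp_pos _)

end Becker

theorem becker_univalence_general (f : ℂ → ℂ) (hf : DifferentiableOn ℂ f (Metric.ball 0 1))
    (hnz : ∀ z ∈ Metric.ball (0 : ℂ) 1, deriv f z ≠ 0)
    (k : ℝ) (hk1 : k < 1)
    (hbd : ∀ z ∈ Metric.ball (0 : ℂ) 1,
      (1 - ‖z‖ ^ 2) * ‖z * deriv (deriv f) z / deriv f z‖ ≤ k) :
    Set.InjOn f (Metric.ball 0 1) := by
  intro a ha b hb hab
  obtain ⟨T, hT, hinj⟩ := exists_injOn_beckerChain hf (hnz 0 (mem_ball_self one_pos))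
  obtain ⟨γa, hγa0, hγa, hγa_le⟩ := exists_isIntegralCurveOn_beckerField hf hnz hk1 hbd hT ha
  obtain ⟨γb, hγb0, hγb, hγb_le⟩ := exists_isIntegralCurveOn_beckerField hf hnz hk1 hbd hT hb
  have hR : max ‖a‖ ‖b‖ < 1 := max_lt (mem_ball_zero_iff.1 ha) (mem_ball_zero_iff.1 hb)
  have hγa_mem : ∀ t ∈ Icc 0 T, γa t ∈ closedBall (0 : ℂ) (max ‖a‖ ‖b‖) := fun t ht =>
    mem_closedBall_zero_iff.2 ((hγa_le t ht).trans (le_max_left _ _))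
  have hγb_mem : ∀ t ∈ Icc 0 T, γb t ∈ closedBall (0 : ℂ) (max ‖a‖ ‖b‖) := fun t ht =>
    mem_closedBall_zero_iff.2 ((hγb_le t ht).trans (le_max_right _ _))
  have hball := closedBall_subset_ball (x := (0 : ℂ)) hR
  have hT_mem : T ∈ Icc 0 T := right_mem_Icc.2 hT
  have hmeet : γa T = γb T := by
    refine hinj (hball (hγa_mem T hT_mem)) (hball (hγb_mem T hT_mem)) ?_
    rw [beckerChain_eq_of_isIntegralCurveOn hf hnz hk1 hbd hT hγa fun t ht => hball (hγa_mem t ht),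
      beckerChain_eq_of_isIntegralCurveOn hf hnz hk1 hbd hT hγb fun t ht => hball (hγb_mem t ht),
      hγa0, hγb0, hab]
  obtain ⟨K, hK⟩ := exists_lipschitzOnWith_beckerField hf hnz hk1 hbd T hR
  have h0 := hγa.eqOn_Icc_of_eq_right hK hγb hγa_mem hγb_mem hmeet (left_mem_Icc.2 hT)
  rwa [hγa0, hγb0] at h0

/-- Becker's univalence criterion: let `f` be holomorphic on the unit disk with
`f 0 = 0`, `f' 0 = 1`, and `f' z ≠ 0` on `𝔻`.  If there is `0 ≤ k < 1` with
`(1 − |z|²)·|z f''(z)/f'(z)| ≤ k` for all `z ∈ 𝔻`, then `f` is injective on `𝔻`. -/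
theorem becker_univalence (f : ℂ → ℂ) (hf : DifferentiableOn ℂ f (Metric.ball 0 1))
    (h0 : f 0 = 0) (h1 : deriv f 0 = 1)
    (hnz : ∀ z ∈ Metric.ball (0 : ℂ) 1, deriv f z ≠ 0)
    (k : ℝ) (hk0 : 0 ≤ k) (hk1 : k < 1)
    (hbd : ∀ z ∈ Metric.ball (0 : ℂ) 1,
      (1 - ‖z‖ ^ 2) * ‖z * deriv (deriv f) z / deriv f z‖ ≤ k) :
    Set.InjOn f (Metric.ball 0 1) :=
  becker_univalence_general f hf hnz k hk1 hbd

end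
end
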